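/- arXiv:math/0004089 — 8 statements merged into one kernel-verified Lean document; each statement's English description precedes it below -/
import Mathlib

section
/- For a submodular function f on subsets of a finite set V with f(∅)=0, and a linear ordering L=(v_1,...,v_n) of V, the vector y defined by y(v_i) = f({v_1,...,v_i}) - f({v_1,...,v_{i-1}}) satisfies y(X) ≤ f(X) for all X ⊆ V, and y(V) = f(V); i.e., y is a base in the base polyhedron B(f). -/
open Finset

theorem greedy_gives_base {V : Type*} [Fintype V] [DecidableEq V]
    (f : Finset V → ℝ)
    (hsub : ∀ X Y : Finset V, f X + f Y ≥ f (X ∪ Y) + f (X ∩ Y))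
    (h0 : f ∅ = 0)
    (L : Fin (Fintype.card V) ≃ V)
    (y : V → ℝ)
    (hy : ∀ i : Fin (Fintype.card V),
      y (L i) = f ((Finset.univ.filter (fun j => j ≤ i)).image L)
              - f ((Finset.univ.filter (fun j => j < i)).image L)) :
    (∀ X : Finset V, ∑ v ∈ X, y v ≤ f X) ∧ (∑ v, y v = f Finset.univ) := by
  constructor
  · intro X
    induction X using Finset.strongInduction with
    | _ X ih =>
      rcases X.eq_empty_or_nonempty with rfl | hX
      · simp [h0]
      · have hSne : (X.image L.symm).Nonempty := hX.image _
        set i := (X.image L.symm).max' hSne with hi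
        have hiX : i ∈ X.image L.symm := Finset.max'_mem _ hSne
        rw [mem_image] at hiX
        obtain ⟨v, hvX, hvi⟩ := hiX
        have hLiX : L i ∈ X := by rw [← hvi, Equiv.apply_symm_apply]; exact hvX
        have hle : ∀ x ∈ X, L.symm x ≤ i := fun x hx =>
          Finset.le_max' _ _ (mem_image_of_mem _ hx)
        set P := (Finset.univ.filter (fun j => j < i)).image L with hP
        set Q := (Finset.univ.filter (fun j => j ≤ i)).image L with hQ
        have hXQ : ∀ x ∈ X, x ∈ Q := by
          intro x hx
          rw [hQ, mem_image]
          exact ⟨L.symm x, by simp [hle x hx], Equiv.apply_symm_apply _ _⟩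
        have hunion : X ∪ P = Q := by
          apply Finset.Subset.antisymm
          · intro x hx
            rcases Finset.mem_union.mp hx with h | h
            · exact hXQ x h
            · rw [hP, mem_image] at h
              obtain ⟨j, hj, rfl⟩ := h
              rw [hQ, mem_image]
              exact ⟨j, by simp_all [le_of_lt], rfl⟩
          · intro x hx
            rw [hQ, mem_image] at hx
            obtain ⟨j, hj, rfl⟩ := hx
            simp only [mem_filter, mem_univ, true_and] at hj
            rcases eq_or_lt_of_le hj with rfl | hj'
            · exact Finset.mem_union_left _ hLiX
            · exact Finset.mem_union_right _ (by rw [hP, mem_image]; exact ⟨j, by simp [hj'], rfl⟩)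
        have hinter : X ∩ P = X.erase (L i) := by
          ext x
          simp only [mem_inter, mem_erase]
          constructor
          · rintro ⟨hx, hxP⟩
            refine ⟨?_, hx⟩
            rw [hP, mem_image] at hxP
            obtain ⟨j, hj, rfl⟩ := hxP
            simp only [mem_filter, mem_univ, true_and] at hj
            intro h
            exact absurd (L.injective h) (ne_of_lt hj)
          · rintro ⟨hne, hx⟩
            refine ⟨hx, ?_⟩
            rw [hP, mem_image]
            refine ⟨L.symm x, ?_, Equiv.apply_symm_apply _ _⟩
            simp only [mem_filter, mem_univ, true_and]
            refine lt_of_le_of_ne (hle x hx) ?_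
            intro h
            apply hne
            rw [← h, Equiv.apply_symm_apply]
          
        have hsubm := hsub X P
        rw [hunion, hinter] at hsubm
        have hih := ih (X.erase (L i)) (Finset.erase_ssubset hLiX)
        have hsum : ∑ v ∈ X, y v = y (L i) + ∑ v ∈ X.erase (L i), y v :=
          (Finset.add_sum_erase _ _ hLiX).symm
        rw [hsum, hy i]
        linarith
  · rw [← Equiv.sum_comp L y]
    have key : ∀ i : Fin (Fintype.card V), y (L i)
        = f ((Finset.univ.filter (fun j : Fin (Fintype.card V) => (j : ℕ) < (i : ℕ) + 1)).image L)
        - f ((Finset.univ.filter (fun j : Fin (Fintype.card V) => (j : ℕ) < (i : ℕ))).image L) := by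
      intro i
      rw [hy i]
      have e1 : (Finset.univ.filter (fun j => j ≤ i))
          = (Finset.univ.filter (fun j : Fin (Fintype.card V) => (j : ℕ) < (i : ℕ) + 1)) := by
        ext j
        simp only [mem_filter, Fin.le_def, Nat.lt_succ_iff]
      have e2 : (Finset.univ.filter (fun j => j < i))
          = (Finset.univ.filter (fun j : Fin (Fintype.card V) => (j : ℕ) < (i : ℕ))) := by
        ext j
        simp only [mem_filter, Fin.lt_def]
      rw [e1, e2]
    simp_rw [key]
    rw [Fin.sum_univ_eq_sum_range
      (fun k => f ((Finset.univ.filter (fun j : Fin (Fintype.card V) => (j : ℕ) < k + 1)).image L)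
        - f ((Finset.univ.filter (fun j : Fin (Fintype.card V) => (j : ℕ) < k)).image L))]
    rw [Finset.sum_range_sub
      (fun k => f ((Finset.univ.filter (fun j : Fin (Fintype.card V) => (j : ℕ) < k)).image L))]
    have h1 : (Finset.univ.filter (fun j : Fin (Fintype.card V) => (j : ℕ) < 0)) = ∅ := by
      ext j; simp
    have h2 : (Finset.univ.filter
        (fun j : Fin (Fintype.card V) => (j : ℕ) < Fintype.card V)) = Finset.univ := by
      ext j; simp [j.isLt]
    have h3 : Finset.image L Finset.univ = Finset.univ := by
      ext v
      simp only [mem_image, mem_univ, iff_true]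
      exact ⟨L.symm v, by simp⟩
    rw [h1, h2, h3]
    simp [h0]
end

section
/- Let f be submodular with f(∅)=0 and let x be a base in B(f). For distinct u,v ∈ V, the maximum α such that x + α(χ_u - χ_v) ∈ B(f) equals min{ f(X) - x(X) : u ∈ X ⊆ V∖{v} }. -/
open Finset

theorem exchange_capacity_eq_min {V : Type*} [Fintype V] [DecidableEq V]
    (f : Finset V → ℝ)
    (hsub : ∀ X Y : Finset V, f X + f Y ≥ f (X ∪ Y) + f (X ∩ Y))
    (h0 : f ∅ = 0)
    (x : V → ℝ)
    (hxV : ∑ v, x v = f Finset.univ)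
    (hxB : ∀ X : Finset V, ∑ v ∈ X, x v ≤ f X)
    (u v : V) (huv : u ≠ v)
    (hne : ((Finset.univ : Finset (Finset V)).filter
        (fun X => u ∈ X ∧ v ∉ X)).Nonempty) :
    IsGreatest {α : ℝ |
        (∑ w, (x w + α * ((if w = u then 1 else 0) - (if w = v then 1 else 0)))
            = f Finset.univ) ∧
        (∀ X : Finset V,
          ∑ w ∈ X, (x w + α * ((if w = u then 1 else 0) - (if w = v then 1 else 0)))
            ≤ f X)}
      (((Finset.univ : Finset (Finset V)).filter (fun X => u ∈ X ∧ v ∉ X)).inf'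
        hne (fun X => f X - ∑ w ∈ X, x w)) := by
  set c := (((Finset.univ : Finset (Finset V)).filter (fun X => u ∈ X ∧ v ∉ X)).inf'
      hne (fun X => f X - ∑ w ∈ X, x w)) with hc
  have key : ∀ (X : Finset V) (α : ℝ),
      ∑ w ∈ X, (x w + α * ((if w = u then 1 else 0) - (if w = v then 1 else 0)))
        = (∑ w ∈ X, x w)
          + α * ((if u ∈ X then (1:ℝ) else 0) - (if v ∈ X then 1 else 0)) := by
    intro X α
    rw [Finset.sum_add_distrib, ← Finset.mul_sum, Finset.sum_sub_distrib,
      Finset.sum_ite_eq' X u (fun _ => (1:ℝ)), Finset.sum_ite_eq' X v (fun _ => (1:ℝ))]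
  have hc0 : 0 ≤ c := by
    apply Finset.le_inf'
    intro X hX
    have := hxB X
    linarith
  constructor
  · constructor
    · rw [key]
      simp [hxV]
    · intro X
      rw [key]
      by_cases hu : u ∈ X <;> by_cases hv : v ∈ X <;> simp [hu, hv]
      · exact hxB X
      · have : c ≤ f X - ∑ w ∈ X, x w :=
          Finset.inf'_le _ (by simp [hu, hv])
        linarith
      · have := hxB X
        linarith
      · exact hxB X
  · intro α hα
    obtain ⟨-, hα2⟩ := hα
    apply Finset.le_inf'
    intro X hX
    simp only [Finset.mem_filter] at hX
    have := hα2 X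
    rw [key] at this
    simp [hX.2.1, hX.2.2] at this
    linarith
end

section
/- Let L be a linear ordering of V generating extreme base y via the greedy algorithm, and let u immediately succeed v in L. Let L' be obtained from L by interchanging u and v, generating extreme base y'. Then y' = y + β(χ_u - χ_v) where β = f(L(u)∖{v}) - f(L(u)) + y(v), and moreover β equals the exchange capacity c̃(y,u,v) = max{α : y + α(χ_u - χ_v) ∈ B(f)}. -/
open Finset

section Aux
variable {V : Type*} [Fintype V] [DecidableEq V]

set_option linter.unusedSectionVars false

def pref (M : Fin (Fintype.card V) ≃ V) (m : ℕ) : Finset V :=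
  (Finset.univ.filter (fun j : Fin (Fintype.card V) => (j : ℕ) < m)).image M

lemma filter_le_image (M : Fin (Fintype.card V) ≃ V) (i : Fin (Fintype.card V)) :
    (Finset.univ.filter (fun j => j ≤ i)).image M = pref M ((i : ℕ) + 1) := by
  unfold pref; congr 1; ext j
  simp only [mem_filter, mem_univ, true_and, Fin.le_def, Nat.lt_succ_iff]

lemma filter_lt_image (M : Fin (Fintype.card V) ≃ V) (i : Fin (Fintype.card V)) :
    (Finset.univ.filter (fun j => j < i)).image M = pref M (i : ℕ) := by
  unfold pref; congr 1

lemma pref_zero (M : Fin (Fintype.card V) ≃ V) : pref M 0 = ∅ := by simp [pref]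

lemma pref_succ (M : Fin (Fintype.card V) ≃ V) {m : ℕ} (hm : m < Fintype.card V) :
    pref M (m + 1) = insert (M ⟨m, hm⟩) (pref M m) := by
  unfold pref
  rw [← Finset.image_insert]
  congr 1
  ext j
  simp only [mem_filter, mem_univ, true_and, mem_insert, Fin.ext_iff]
  omega

lemma pref_card (M : Fin (Fintype.card V) ≃ V) : pref M (Fintype.card V) = Finset.univ := by
  unfold pref
  rw [show (univ.filter fun j : Fin (Fintype.card V) => (j : ℕ) < Fintype.card V) = univ by
    simp [Fin.is_lt]]
  ext x
  simp only [mem_image, mem_univ, iff_true]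
  exact ⟨M.symm x, trivial, M.apply_symm_apply x⟩

lemma mem_pref (M : Fin (Fintype.card V) ≃ V) (i : Fin (Fintype.card V)) (m : ℕ) :
    M i ∈ pref M m ↔ (i : ℕ) < m := by
  unfold pref
  simp [M.injective.eq_iff]

lemma mem_pref' (M : Fin (Fintype.card V) ≃ V) (w : V) (m : ℕ) :
    w ∈ pref M m ↔ (M.symm w : ℕ) < m := by
  conv_lhs => rw [← M.apply_symm_apply w]
  exact mem_pref M _ m

lemma pref_sum (f : Finset V → ℝ) (h0 : f ∅ = 0) (M : Fin (Fintype.card V) ≃ V)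
    (y : V → ℝ)
    (hy : ∀ i : Fin (Fintype.card V),
      y (M i) = f ((Finset.univ.filter (fun j => j ≤ i)).image M)
              - f ((Finset.univ.filter (fun j => j < i)).image M)) :
    ∀ m, m ≤ Fintype.card V → ∑ w ∈ pref M m, y w = f (pref M m) := by
  intro m
  induction m with
  | zero => intro _; simp [pref_zero, h0]
  | succ m ih =>
    intro hm
    have hm' : m < Fintype.card V := hm
    have hmem : M ⟨m, hm'⟩ ∉ pref M m := by simp [mem_pref]
    have hval : y (M ⟨m, hm'⟩) = f (pref M (m + 1)) - f (pref M m) := by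
      have := hy ⟨m, hm'⟩
      rwa [filter_le_image, filter_lt_image] at this
    rw [pref_succ M hm', Finset.sum_insert hmem, hval, ih (le_of_lt hm'), ← pref_succ M hm']
    ring

lemma greedy_le (f : Finset V → ℝ)
    (hsub : ∀ X Y : Finset V, f X + f Y ≥ f (X ∪ Y) + f (X ∩ Y)) (h0 : f ∅ = 0)
    (M : Fin (Fintype.card V) ≃ V) (y : V → ℝ)
    (hy : ∀ i : Fin (Fintype.card V),
      y (M i) = f ((Finset.univ.filter (fun j => j ≤ i)).image M)
              - f ((Finset.univ.filter (fun j => j < i)).image M)) :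
    ∀ X : Finset V, ∑ w ∈ X, y w ≤ f X := by
  intro X
  induction X using Finset.strongInduction with
  | _ X ih =>
  rcases X.eq_empty_or_nonempty with rfl | hne
  · simp [h0]
  · have hSne : (X.image M.symm).Nonempty := hne.image _
    set i := (X.image M.symm).max' hSne with hi
    have hiX : M i ∈ X := by
      have h := (X.image M.symm).max'_mem hSne
      rw [← hi] at h
      simp only [mem_image] at h
      obtain ⟨w, hw, hwi⟩ := h
      rw [← hwi, M.apply_symm_apply]; exact hw
    set Q : Finset V := (univ.filter (fun j => j < i)).image M with hQ
    have hMiQ : M i ∉ Q := by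
      rw [hQ, filter_lt_image, mem_pref]; omega
    have hsubQ : X.erase (M i) ⊆ Q := by
      intro w hw
      have hw1 : w ∈ X := mem_of_mem_erase hw
      have hw2 : w ≠ M i := ne_of_mem_erase hw
      have hle : M.symm w ≤ i := le_max' _ _ (mem_image_of_mem _ hw1)
      have hlt : M.symm w < i := lt_of_le_of_ne hle (fun h => hw2 (by rw [← h, M.apply_symm_apply]))
      rw [hQ, filter_lt_image, mem_pref']
      exact hlt
    have hU : Q ∪ X = insert (M i) Q := by
      ext w
      simp only [mem_union, mem_insert]
      constructor
      · rintro (h | h)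
        · exact Or.inr h
        · by_cases hw : w = M i
          · exact Or.inl hw
          · exact Or.inr (hsubQ (mem_erase.mpr ⟨hw, h⟩))
      · rintro (rfl | h)
        · exact Or.inr hiX
        · exact Or.inl h
    have hI : Q ∩ X = X.erase (M i) := by
      ext w
      simp only [mem_inter, mem_erase]
      constructor
      · rintro ⟨h1, h2⟩; exact ⟨fun h => hMiQ (h ▸ h1), h2⟩
      · intro h; exact ⟨hsubQ (mem_erase.mpr h), h.2⟩
    have hyi : y (M i) = f (insert (M i) Q) - f Q := by
      have h := hy i
      have hP : (univ.filter (fun j => j ≤ i)).image M = insert (M i) Q := by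
        rw [hQ, filter_lt_image, filter_le_image, pref_succ M i.is_lt]
      rw [hP] at h
      exact h
    have hsm := hsub Q X
    rw [hU, hI] at hsm
    have hih := ih (X.erase (M i)) (erase_ssubset hiX)
    have hsumX : ∑ w ∈ X, y w = y (M i) + ∑ w ∈ X.erase (M i), y w :=
      (Finset.add_sum_erase _ _ hiX).symm
    rw [hsumX, hyi]
    linarith

end Aux

set_option linter.unusedSectionVars false
section Aux2
open Finset
variable {V : Type*} [Fintype V] [DecidableEq V]

lemma greedy_total (f : Finset V → ℝ) (h0 : f ∅ = 0) (M : Fin (Fintype.card V) ≃ V)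
    (y : V → ℝ)
    (hy : ∀ i : Fin (Fintype.card V),
      y (M i) = f ((Finset.univ.filter (fun j => j ≤ i)).image M)
              - f ((Finset.univ.filter (fun j => j < i)).image M)) :
    ∑ w, y w = f Finset.univ := by
  have h := pref_sum f h0 M y hy (Fintype.card V) le_rfl
  rwa [pref_card] at h

lemma image_swap_self (u v : V) (A : Finset V)
    (h : (u ∈ A ∧ v ∈ A) ∨ (u ∉ A ∧ v ∉ A)) :
    A.image (Equiv.swap u v) = A := by
  have hsub : A.image (Equiv.swap u v) ⊆ A := by
    intro x hx
    obtain ⟨a, ha, rfl⟩ := Finset.mem_image.mp hx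
    by_cases hau : a = u
    · subst hau; rw [Equiv.swap_apply_left]
      rcases h with ⟨_, hv⟩ | ⟨hu, _⟩
      · exact hv
      · exact absurd ha hu
    by_cases hav : a = v
    · subst hav; rw [Equiv.swap_apply_right]
      rcases h with ⟨hu, _⟩ | ⟨_, hv⟩
      · exact hu
      · exact absurd ha hv
    · rwa [Equiv.swap_apply_of_ne_of_ne hau hav]
  exact Finset.eq_of_subset_of_card_le hsub
    (le_of_eq (Finset.card_image_of_injective A (Equiv.injective _)).symm)

end Aux2

theorem swap_consecutive_exchange {V : Type*} [Fintype V] [DecidableEq V]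
    (f : Finset V → ℝ)
    (hsub : ∀ X Y : Finset V, f X + f Y ≥ f (X ∪ Y) + f (X ∩ Y))
    (h0 : f ∅ = 0)
    (L : Fin (Fintype.card V) ≃ V)
    (u v : V) (huv : u ≠ v)
    (hsucc : (L.symm u : ℕ) = (L.symm v : ℕ) + 1)
    (y y' : V → ℝ)
    (hy : ∀ i : Fin (Fintype.card V),
      y (L i) = f ((Finset.univ.filter (fun j => j ≤ i)).image L)
              - f ((Finset.univ.filter (fun j => j < i)).image L))
    (L' : Fin (Fintype.card V) ≃ V)
    (hL' : L' = L.trans (Equiv.swap u v))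
    (hy' : ∀ i : Fin (Fintype.card V),
      y' (L' i) = f ((Finset.univ.filter (fun j => j ≤ i)).image L')
               - f ((Finset.univ.filter (fun j => j < i)).image L'))
    (β : ℝ)
    (hβ : β = f (((Finset.univ.filter (fun j => j ≤ L.symm u)).image L) \ {v})
            - f ((Finset.univ.filter (fun j => j ≤ L.symm u)).image L) + y v) :
    (∀ w, y' w = y w + β * ((if w = u then 1 else 0) - (if w = v then 1 else 0)))
    ∧ IsGreatest {α : ℝ |
        (∑ w, (y w + α * ((if w = u then 1 else 0) - (if w = v then 1 else 0)))
            = f Finset.univ) ∧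
        (∀ X : Finset V,
          ∑ w ∈ X, (y w + α * ((if w = u then 1 else 0) - (if w = v then 1 else 0)))
            ≤ f X)} β := by
  set k := L.symm v with hkdef
  set k' := L.symm u with hk'def
  have hk : (k' : ℕ) = (k : ℕ) + 1 := hsucc
  have hkn : (k : ℕ) < Fintype.card V := k.is_lt
  have hk'n : (k : ℕ) + 1 < Fintype.card V := hk ▸ k'.is_lt
  have hLk : L k = v := L.apply_symm_apply v
  have hLk' : L k' = u := L.apply_symm_apply u
  set A := pref L (k : ℕ) with hA
  have hvA : v ∉ A := by rw [hA, mem_pref', ← hkdef]; omega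
  have huA : u ∉ A := by rw [hA, mem_pref', ← hk'def]; omega
  have hkk : (⟨(k : ℕ), hkn⟩ : Fin (Fintype.card V)) = k := Fin.ext rfl
  have hkk' : (⟨(k : ℕ) + 1, hk'n⟩ : Fin (Fintype.card V)) = k' := Fin.ext hk.symm
  have hpk1 : pref L ((k : ℕ) + 1) = insert v A := by
    rw [pref_succ L hkn, hkk, hLk, ← hA]
  have hpk2 : pref L ((k : ℕ) + 2) = insert u (insert v A) := by
    rw [show (k : ℕ) + 2 = ((k : ℕ) + 1) + 1 from rfl, pref_succ L hk'n, hkk', hLk', hpk1]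
  -- swap image of prefixes
  have hprefswap : ∀ m, pref L' m = (pref L m).image (Equiv.swap u v) := by
    intro m
    rw [hL']
    unfold pref
    rw [Finset.image_image]
    rfl
  have hmemu : ∀ m, u ∈ pref L m ↔ (k : ℕ) + 1 < m := by
    intro m
    rw [mem_pref', ← hk'def, hk]
  have hmemv : ∀ m, v ∈ pref L m ↔ (k : ℕ) < m := by
    intro m; rw [mem_pref', ← hkdef]
  have hlow : ∀ m, m ≤ (k : ℕ) → pref L' m = pref L m := by
    intro m hm
    rw [hprefswap]
    exact image_swap_self u v _ (Or.inr ⟨by rw [hmemu]; omega, by rw [hmemv]; omega⟩)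
  have hhigh : ∀ m, (k : ℕ) + 2 ≤ m → pref L' m = pref L m := by
    intro m hm
    rw [hprefswap]
    exact image_swap_self u v _ (Or.inl ⟨by rw [hmemu]; omega, by rw [hmemv]; omega⟩)
  have hmid : pref L' ((k : ℕ) + 1) = insert u A := by
    rw [hprefswap, hpk1, Finset.image_insert, Equiv.swap_apply_right,
      image_swap_self u v A (Or.inr ⟨huA, hvA⟩)]
  -- greedy values
  have hyv : y v = f (insert v A) - f A := by
    have h := hy k
    rwa [filter_le_image, filter_lt_image, hLk, hpk1, ← hA] at h
  have hyu : y u = f (insert u (insert v A)) - f (insert v A) := by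
    have h := hy k'
    rwa [filter_le_image, filter_lt_image, hLk', hk,
      show (k : ℕ) + 1 + 1 = (k : ℕ) + 2 from rfl, hpk2, hpk1] at h
  have hL'k : L' k = u := by rw [hL']; simp [hLk]
  have hL'k' : L' k' = v := by rw [hL']; simp [hLk']
  have hy'u : y' u = f (insert u A) - f A := by
    have h := hy' k
    rwa [filter_le_image, filter_lt_image, hL'k, hmid, hlow (k : ℕ) le_rfl, ← hA] at h
  have hy'v : y' v = f (insert u (insert v A)) - f (insert u A) := by
    have h := hy' k'
    rwa [filter_le_image, filter_lt_image, hL'k', hk,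
      show (k : ℕ) + 1 + 1 = (k : ℕ) + 2 from rfl,
      hhigh ((k : ℕ) + 2) le_rfl, hpk2, hmid] at h
  -- beta
  have hdiff : (insert u (insert v A)) \ {v} = insert u A := by
    ext x
    simp only [Finset.mem_sdiff, Finset.mem_insert, Finset.mem_singleton]
    constructor
    · rintro ⟨h1 | h1 | h1, h2⟩
      · exact Or.inl h1
      · exact absurd h1 h2
      · exact Or.inr h1
    · rintro (rfl | h1)
      · exact ⟨Or.inl rfl, huv⟩
      · exact ⟨Or.inr (Or.inr h1), fun h => hvA (h ▸ h1)⟩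
  have hβ' : β = f (insert u A) - f (insert u (insert v A)) + y v := by
    rw [hβ, filter_le_image, hk,
      show (k : ℕ) + 1 + 1 = (k : ℕ) + 2 from rfl, hpk2, hdiff]
  -- Part 1
  have h1 : ∀ w, y' w = y w + β * ((if w = u then 1 else 0) - (if w = v then 1 else 0)) := by
    intro w
    by_cases hwu : w = u
    · subst hwu
      rw [if_pos rfl, if_neg huv, hy'u, hyu, hβ', hyv]
      ring
    by_cases hwv : w = v
    · subst hwv
      rw [if_neg hwu, if_pos rfl, hy'v, hβ', hyv]
      ring
    · rw [if_neg hwu, if_neg hwv]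
      set i := L.symm w with hidef
      have hLi : L i = w := L.apply_symm_apply w
      have hik : i ≠ k := fun h => hwv (by rw [← hLi, h, hLk])
      have hik' : i ≠ k' := fun h => hwu (by rw [← hLi, h, hLk'])
      have hL'i : L' i = w := by
        rw [hL', Equiv.trans_apply, hLi, Equiv.swap_apply_of_ne_of_ne hwu hwv]
      have h := hy' i
      rw [hL'i, filter_le_image, filter_lt_image] at h
      have h2 := hy i
      rw [hLi, filter_le_image, filter_lt_image] at h2
      have hcases : (i : ℕ) + 1 ≤ (k : ℕ) ∨ (k : ℕ) + 2 ≤ (i : ℕ) := by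
        have h3 : (i : ℕ) ≠ (k : ℕ) := fun h => hik (Fin.ext h)
        have h4 : (i : ℕ) ≠ (k : ℕ) + 1 := fun h => hik' (Fin.ext (by omega))
        omega
      rcases hcases with hc | hc
      · rw [hlow _ hc, hlow _ (by omega)] at h
        rw [h, h2]
        ring
      · rw [hhigh _ (by omega), hhigh _ (by omega)] at h
        rw [h, h2]
        ring
  refine ⟨h1, ⟨?_, ?_⟩, ?_⟩
  · rw [Finset.sum_congr rfl (fun w _ => (h1 w).symm)]
    exact greedy_total f h0 L' y' hy'
  · intro X
    rw [Finset.sum_congr rfl (fun w _ => (h1 w).symm)]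
    exact greedy_le f hsub h0 L' y' hy' X
  · rintro α ⟨-, hX⟩
    have h := hX (insert u A)
    have hvAu : v ∉ insert u A := by
      simp only [Finset.mem_insert]
      push_neg
      exact ⟨fun h => huv h.symm, hvA⟩
    have hchi : ∑ w ∈ insert u A,
        ((if w = u then (1:ℝ) else 0) - (if w = v then 1 else 0)) = 1 := by
      rw [Finset.sum_sub_distrib, Finset.sum_ite_eq' (insert u A) u (fun _ => (1:ℝ)),
        Finset.sum_ite_eq' (insert u A) v (fun _ => (1:ℝ)),
        if_pos (Finset.mem_insert_self u A), if_neg hvAu]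
      ring
    have hsplit : ∑ w ∈ insert u A,
        (y w + α * ((if w = u then (1:ℝ) else 0) - (if w = v then 1 else 0)))
        = (∑ w ∈ insert u A, y w) + α := by
      rw [Finset.sum_add_distrib, ← Finset.mul_sum, hchi, mul_one]
    have hset : insert u (insert v A) = insert v (insert u A) := Finset.insert_comm u v A
    have hAuv : y v + ∑ w ∈ insert u A, y w = f (insert u (insert v A)) := by
      have hp := pref_sum f h0 L y hy ((k : ℕ) + 2) (by omega)
      rw [hpk2] at hp
      rw [← Finset.sum_insert hvAu, ← hset]
      exact hp
    rw [hsplit] at h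
    rw [hβ']
    linarith [h, hAuv]
end

section
/- Let f be submodular with f(∅)=0, x ∈ B(f), δ > 0, and φ a skew-symmetric δ-feasible flow on V. Then z = x - ∂φ satisfies z⁻(V) ≤ f(X) + binom(n,2)·δ for every X ⊆ V. -/
open Finset

lemma aux_card_choose (k m : ℕ) : k * m ≤ (k + m).choose 2 := by
  rw [Nat.choose_two_right]
  rw [Nat.le_div_iff_mul_le (by norm_num : 0 < 2)]
  rcases Nat.eq_zero_or_pos k with hk | hk
  · simp [hk]
  rcases Nat.eq_zero_or_pos m with hm | hm
  · simp [hm]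
  obtain ⟨k', rfl⟩ := Nat.exists_eq_add_of_lt hk
  obtain ⟨m', rfl⟩ := Nat.exists_eq_add_of_lt hm
  simp only [Nat.zero_add]
  have h1 : k' + 1 + (m' + 1) - 1 = k' + m' + 1 := by omega
  rw [h1]
  nlinarith [Nat.zero_le (k' * k'), Nat.zero_le (m' * m')]

theorem relaxed_weak_duality {V : Type*} [Fintype V] [DecidableEq V]
    (f : Finset V → ℝ)
    (hsub : ∀ X Y : Finset V, f X + f Y ≥ f (X ∪ Y) + f (X ∩ Y))
    (h0 : f ∅ = 0)
    (x : V → ℝ)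
    (hxV : ∑ v, x v = f Finset.univ)
    (hxB : ∀ X : Finset V, ∑ v ∈ X, x v ≤ f X)
    (δ : ℝ) (hδ : 0 < δ)
    (φ : V → V → ℝ)
    (hskew : ∀ u v, φ u v = -φ v u)
    (hcap : ∀ u v, |φ u v| ≤ δ) :
    ∀ X : Finset V,
      ∑ v, min 0 (x v - ∑ u, φ u v)
        ≤ f X + ((Fintype.card V).choose 2 : ℝ) * δ := by
  intro X
  set z : V → ℝ := fun v => x v - ∑ u, φ u v with hz
  -- Step A: z⁻(V) ≤ ∑_{v∈X} z v
  have stepA : ∑ v, min 0 (z v) ≤ ∑ v ∈ X, z v := by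
    have h1 : ∑ v, min 0 (z v) ≤ ∑ v, (if v ∈ X then z v else 0) := by
      apply Finset.sum_le_sum
      intro v _
      by_cases hv : v ∈ X
      · simp [hv, min_le_right]
      · simp [hv]
    have h2 : ∑ v, (if v ∈ X then z v else 0) = ∑ v ∈ X, z v := by
      rw [Finset.sum_ite_mem, Finset.univ_inter]
    linarith
  -- Step B/C: split the boundary
  have hXsub : X ⊆ Finset.univ := Finset.subset_univ X
  have hinternal : ∑ v ∈ X, ∑ u ∈ X, φ u v = 0 := by
    have h1 : ∑ v ∈ X, ∑ u ∈ X, φ u v = ∑ u ∈ X, ∑ v ∈ X, φ u v :=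
      Finset.sum_comm
    have h2 : ∑ u ∈ X, ∑ v ∈ X, φ u v = -∑ u ∈ X, ∑ v ∈ X, φ v u := by
      rw [← Finset.sum_neg_distrib]
      refine Finset.sum_congr rfl fun u _ => ?_
      rw [← Finset.sum_neg_distrib]
      exact Finset.sum_congr rfl fun v _ => hskew u v
    have h3 : ∑ u ∈ X, ∑ v ∈ X, φ v u = ∑ v ∈ X, ∑ u ∈ X, φ u v := rfl
    rw [h3] at h2
    rw [h2] at h1
    linarith
  have hsplit : ∑ v ∈ X, ∑ u, φ u v
      = ∑ v ∈ X, ∑ u ∈ Finset.univ \ X, φ u v := by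
    have : ∀ v, ∑ u, φ u v = ∑ u ∈ X, φ u v + ∑ u ∈ Finset.univ \ X, φ u v := by
      intro v
      rw [Finset.sum_sdiff_eq_sub hXsub]
      ring
    simp_rw [this]
    rw [Finset.sum_add_distrib, hinternal, zero_add]
  -- Step D: boundary bound
  have hbound : -(∑ v ∈ X, ∑ u ∈ Finset.univ \ X, φ u v)
      ≤ (X.card * (Finset.univ \ X).card : ℝ) * δ := by
    rw [← Finset.sum_neg_distrib]
    calc ∑ v ∈ X, -∑ u ∈ Finset.univ \ X, φ u v
        = ∑ v ∈ X, ∑ u ∈ Finset.univ \ X, -φ u v := by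
          simp [Finset.sum_neg_distrib]
      _ ≤ ∑ v ∈ X, ∑ u ∈ Finset.univ \ X, δ := by
          apply Finset.sum_le_sum
          intro v _
          apply Finset.sum_le_sum
          intro u _
          have := abs_le.mp (hcap u v)
          linarith [this.1]
      _ = (X.card * (Finset.univ \ X).card : ℝ) * δ := by
          simp [Finset.sum_const, nsmul_eq_mul]
          ring
  -- card bound
  have hcard : (X.card * (Finset.univ \ X).card : ℝ) ≤ ((Fintype.card V).choose 2 : ℝ) := by
    have h1 : X.card + (Finset.univ \ X).card = Fintype.card V := by
      have hle : X.card ≤ Fintype.card V := by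
        rw [← Finset.card_univ]; exact Finset.card_le_card hXsub
      rw [Finset.card_sdiff_of_subset hXsub, Finset.card_univ]
      omega
    have := aux_card_choose X.card (Finset.univ \ X).card
    rw [h1] at this
    exact_mod_cast this
  -- assemble
  have hzX : ∑ v ∈ X, z v = ∑ v ∈ X, x v - ∑ v ∈ X, ∑ u, φ u v := by
    rw [← Finset.sum_sub_distrib]
  have hxX := hxB X
  have : (X.card * (Finset.univ \ X).card : ℝ) * δ
      ≤ ((Fintype.card V).choose 2 : ℝ) * δ := by
    apply mul_le_mul_of_nonneg_right hcard (le_of_lt hδ)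
  calc ∑ v, min 0 (z v) ≤ ∑ v ∈ X, z v := stepA
    _ = ∑ v ∈ X, x v - ∑ v ∈ X, ∑ u, φ u v := hzX
    _ = ∑ v ∈ X, x v + (-(∑ v ∈ X, ∑ u ∈ Finset.univ \ X, φ u v)) := by
        rw [hsplit]; ring
    _ ≤ f X + (X.card * (Finset.univ \ X).card : ℝ) * δ := by
        linarith
    _ ≤ f X + ((Fintype.card V).choose 2 : ℝ) * δ := by linarith
end

section
/- Let x ∈ B(f), δ > 0, and φ a skew-symmetric δ-feasible flow with boundary ∂φ. Suppose x(v) > ∂φ(v) - δ for all v ∈ V (i.e., the source set S is empty). Then x⁻(V) ≥ f(∅) - n²δ and z⁻(V) ≥ f(∅) - nδ where z = x - ∂φ. -/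
open Finset

theorem empty_source_bound {V : Type*} [Fintype V] [DecidableEq V]
    (f : Finset V → ℝ)
    (hsub : ∀ X Y : Finset V, f X + f Y ≥ f (X ∪ Y) + f (X ∩ Y))
    (h0 : f ∅ = 0)
    (x : V → ℝ)
    (hxV : ∑ v, x v = f Finset.univ)
    (hxB : ∀ X : Finset V, ∑ v ∈ X, x v ≤ f X)
    (δ : ℝ) (hδ : 0 < δ)
    (φ : V → V → ℝ)
    (hskew : ∀ u v, φ u v = -φ v u)
    (hcap : ∀ u v, |φ u v| ≤ δ)
    (hS : ∀ v : V, x v > (∑ u, φ u v) - δ) :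
    ∑ v, min 0 (x v) ≥ f ∅ - (Fintype.card V : ℝ)^2 * δ
    ∧ ∑ v, min 0 (x v - ∑ u, φ u v) ≥ f ∅ - (Fintype.card V : ℝ) * δ := by
  set n : ℝ := (Fintype.card V : ℝ) with hn
  have hn0 : 0 ≤ n := by positivity
  have hφvv : ∀ v, φ v v = 0 := fun v => by have := hskew v v; linarith
  have hbd : ∀ v : V, -((n - 1) * δ) ≤ ∑ u, φ u v := by
    intro v
    have h1 : ∑ u, φ u v = ∑ u ∈ Finset.univ.erase v, φ u v :=
      (Finset.sum_erase (f := fun u => φ u v) Finset.univ (hφvv v)).symm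
    have hcard : ((Finset.univ.erase v).card : ℝ) = n - 1 := by
      rw [Finset.card_erase_of_mem (Finset.mem_univ v)]
      have : 1 ≤ Fintype.card V := Fintype.card_pos_iff.mpr ⟨v⟩
      push_cast [Finset.card_univ, Nat.cast_sub this]
      ring
    have h2 : ∑ u ∈ Finset.univ.erase v, (-δ) ≤ ∑ u ∈ Finset.univ.erase v, φ u v :=
      Finset.sum_le_sum fun u _ => (abs_le.mp (hcap u v)).1
    rw [h1]
    calc -((n - 1) * δ) = ∑ u ∈ Finset.univ.erase v, (-δ) := by
          rw [Finset.sum_const, nsmul_eq_mul, hcard]; ring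
      _ ≤ _ := h2
  have hmin1 : ∀ v : V, -(n * δ) ≤ min 0 (x v) := by
    intro v
    have h1 := hS v
    have h2 := hbd v
    have : -(n * δ) ≤ x v := by nlinarith
    exact le_min (by nlinarith) this
  have hmin2 : ∀ v : V, -δ ≤ min 0 (x v - ∑ u, φ u v) := by
    intro v
    have h1 := hS v
    exact le_min (by linarith) (by linarith)
  constructor
  · have := Finset.sum_le_sum (fun v (_ : v ∈ Finset.univ) => hmin1 v)
    rw [Finset.sum_const, Finset.card_univ, nsmul_eq_mul] at this
    rw [h0]
    calc 0 - n ^ 2 * δ = n * (-(n * δ)) := by ring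
      _ ≤ _ := this
  · have := Finset.sum_le_sum (fun v (_ : v ∈ Finset.univ) => hmin2 v)
    rw [Finset.sum_const, Finset.card_univ, nsmul_eq_mul] at this
    rw [h0]
    calc 0 - n * δ = n * (-δ) := by ring
      _ ≤ _ := this
end

section
/- Let x ∈ B(f), δ > 0, and φ a skew-symmetric δ-feasible flow. Suppose x(v) < ∂φ(v) + δ for all v ∈ V (i.e., the sink set T is empty). Then x⁻(V) ≥ f(V) - n²δ and z⁻(V) ≥ f(V) - nδ where z = x - ∂φ. -/
open Finset

theorem empty_sink_bound {V : Type*} [Fintype V] [DecidableEq V]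
    (f : Finset V → ℝ)
    (hsub : ∀ X Y : Finset V, f X + f Y ≥ f (X ∪ Y) + f (X ∩ Y))
    (h0 : f ∅ = 0)
    (x : V → ℝ)
    (hxV : ∑ v, x v = f Finset.univ)
    (hxB : ∀ X : Finset V, ∑ v ∈ X, x v ≤ f X)
    (δ : ℝ) (hδ : 0 < δ)
    (φ : V → V → ℝ)
    (hskew : ∀ u v, φ u v = -φ v u)
    (hcap : ∀ u v, |φ u v| ≤ δ)
    (hT : ∀ v : V, x v < (∑ u, φ u v) + δ) :
    ∑ v, min 0 (x v) ≥ f Finset.univ - (Fintype.card V : ℝ)^2 * δ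
    ∧ ∑ v, min 0 (x v - ∑ u, φ u v) ≥ f Finset.univ - (Fintype.card V : ℝ) * δ := by
  set n : ℝ := (Fintype.card V : ℝ) with hn
  have hn0 : 0 ≤ n := Nat.cast_nonneg _
  have hφ0 : ∀ v, φ v v = 0 := fun v => by have := hskew v v; linarith
  -- bound on boundary
  have hbd : ∀ v, ∑ u, φ u v ≤ (n - 1) * δ := by
    intro v
    have h1 : ∑ u, φ u v = ∑ u ∈ Finset.univ.erase v, φ u v := by
      rw [← Finset.add_sum_erase _ _ (Finset.mem_univ v), hφ0, zero_add]
    rw [h1]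
    calc ∑ u ∈ Finset.univ.erase v, φ u v
        ≤ ∑ u ∈ Finset.univ.erase v, δ := by
          refine Finset.sum_le_sum fun u _ => ?_
          have := hcap u v; exact (abs_le.mp this).2
      _ = ((Finset.univ.erase v).card : ℝ) * δ := by
          rw [Finset.sum_const, nsmul_eq_mul]
      _ = (n - 1) * δ := by
          rw [Finset.card_erase_of_mem (Finset.mem_univ v), Finset.card_univ]
          have h1 : 1 ≤ Fintype.card V := Fintype.card_pos_iff.mpr ⟨v⟩
          push_cast [h1]
          ring
  -- total flow is zero
  have hsum0 : ∑ v, ∑ u, φ u v = 0 := by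
    have h1 : ∑ v, ∑ u, φ u v = ∑ u, ∑ v, φ u v := Finset.sum_comm
    have h2 : ∑ u : V, ∑ v : V, φ u v = -∑ v, ∑ u, φ u v := by
      rw [← Finset.sum_neg_distrib]
      refine Finset.sum_congr rfl fun u _ => ?_
      rw [← Finset.sum_neg_distrib]
      exact Finset.sum_congr rfl fun v _ => hskew u v
    linarith
  constructor
  · have key : ∀ v, min 0 (x v) ≥ x v - n * δ := by
      intro v
      have hx : x v ≤ n * δ := by
        have := hT v
        have := hbd v
        nlinarith
      rcases le_or_gt (x v) 0 with h | h
      · rw [min_eq_right h]; nlinarith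
      · rw [min_eq_left h.le]; nlinarith
    calc ∑ v, min 0 (x v) ≥ ∑ v, (x v - n * δ) := Finset.sum_le_sum fun v _ => key v
      _ = f Finset.univ - n ^ 2 * δ := by
          rw [Finset.sum_sub_distrib, hxV, Finset.sum_const, nsmul_eq_mul, Finset.card_univ]
          ring
  · have key : ∀ v, min 0 (x v - ∑ u, φ u v) ≥ (x v - ∑ u, φ u v) - δ := by
      intro v
      have hz : x v - ∑ u, φ u v ≤ δ := by have := hT v; linarith
      rcases le_or_gt (x v - ∑ u, φ u v) 0 with h | h
      · rw [min_eq_right h]; linarith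
      · rw [min_eq_left h.le]; linarith
    calc ∑ v, min 0 (x v - ∑ u, φ u v)
        ≥ ∑ v, ((x v - ∑ u, φ u v) - δ) := Finset.sum_le_sum fun v _ => key v
      _ = f Finset.univ - n * δ := by
          rw [Finset.sum_sub_distrib, Finset.sum_sub_distrib, hxV, hsum0,
            Finset.sum_const, nsmul_eq_mul, Finset.card_univ]
          ring
end

section
/- Let x ∈ B(f), δ > 0, φ a skew-symmetric δ-feasible flow, and W ⊆ V with x(W) = f(W), ∂φ(W) < 0, x(v) > ∂φ(v) - δ for all v ∈ V∖W, and x(v) < ∂φ(v) + δ for all v ∈ W. Then x⁻(V) ≥ f(W) - n²δ and z⁻(V) ≥ f(W) - nδ, where z = x - ∂φ. -/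
open Finset

theorem tight_cut_bound {V : Type*} [Fintype V] [DecidableEq V]
    (f : Finset V → ℝ)
    (hsub : ∀ X Y : Finset V, f X + f Y ≥ f (X ∪ Y) + f (X ∩ Y))
    (h0 : f ∅ = 0)
    (x : V → ℝ)
    (hxV : ∑ v, x v = f Finset.univ)
    (hxB : ∀ X : Finset V, ∑ v ∈ X, x v ≤ f X)
    (δ : ℝ) (hδ : 0 < δ)
    (φ : V → V → ℝ)
    (hskew : ∀ u v, φ u v = -φ v u)
    (hcap : ∀ u v, |φ u v| ≤ δ)
    (W : Finset V)
    (htight : ∑ v ∈ W, x v = f W)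
    (hbW : ∑ v ∈ W, (∑ u, φ u v) < 0)
    (hout : ∀ v ∉ W, x v > (∑ u, φ u v) - δ)
    (hin : ∀ v ∈ W, x v < (∑ u, φ u v) + δ) :
    ∑ v, min 0 (x v) ≥ f W - (Fintype.card V : ℝ)^2 * δ
    ∧ ∑ v, min 0 (x v - ∑ u, φ u v) ≥ f W - (Fintype.card V : ℝ) * δ := by
  classical
  set n : ℝ := (Fintype.card V : ℝ) with hn
  have hφvv : ∀ v, φ v v = 0 := fun v => by have := hskew v v; linarith
  have hWne : W.Nonempty := by
    by_contra h
    rw [Finset.not_nonempty_iff_eq_empty] at h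
    simp [h] at hbW
  have hcard1 : 1 ≤ Fintype.card V := Fintype.card_pos_iff.mpr ⟨hWne.choose⟩
  have hn1 : (1 : ℝ) ≤ n := by rw [hn]; exact_mod_cast hcard1
  have hdphi : ∀ v, |∑ u, φ u v| ≤ (n - 1) * δ := by
    intro v
    have h1 : ∑ u, φ u v = ∑ u ∈ univ.erase v, φ u v :=
      (Finset.sum_erase (f := fun u => φ u v) univ (hφvv v)).symm
    rw [h1]
    calc |∑ u ∈ univ.erase v, φ u v| ≤ ∑ u ∈ univ.erase v, |φ u v| :=
          Finset.abs_sum_le_sum_abs _ _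
      _ ≤ ∑ _u ∈ univ.erase v, δ := Finset.sum_le_sum (fun u _ => hcap u v)
      _ = ((Fintype.card V - 1 : ℕ) : ℝ) * δ := by
          rw [Finset.sum_const, Finset.card_erase_of_mem (mem_univ v), Finset.card_univ,
            nsmul_eq_mul]
      _ = (n - 1) * δ := by
          rw [Nat.cast_sub hcard1]; norm_num; exact Or.inl hn.symm
  have hcardW : (W.card : ℝ) + (Wᶜ.card : ℝ) = n := by
    rw [hn, ← Nat.cast_add]
    norm_cast
    exact Finset.card_add_card_compl W
  have hnδ : 0 ≤ n * δ := by positivity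
  constructor
  · -- first claim
    have hA : ∑ v ∈ W, (x v - n * δ) ≤ ∑ v ∈ W, min 0 (x v) := by
      apply Finset.sum_le_sum
      intro v hv
      have h1 := hin v hv
      have h2 := hdphi v
      have h3 : ∑ u, φ u v ≤ (n - 1) * δ := le_trans (le_abs_self _) h2
      rcases le_total (x v) 0 with h4 | h4
      · rw [min_eq_right h4]; linarith
      · rw [min_eq_left h4]; nlinarith
    have hB : ∑ _v ∈ Wᶜ, (-(n * δ)) ≤ ∑ v ∈ Wᶜ, min 0 (x v) := by
      apply Finset.sum_le_sum
      intro v hv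
      have h1 := hout v (Finset.mem_compl.mp hv)
      have h2 := hdphi v
      have h3 : -((n - 1) * δ) ≤ ∑ u, φ u v := neg_le_of_abs_le h2
      rcases le_total (x v) 0 with h4 | h4
      · rw [min_eq_right h4]; nlinarith
      · rw [min_eq_left h4]; linarith
    have hsplit : ∑ v ∈ W, min 0 (x v) + ∑ v ∈ Wᶜ, min 0 (x v) = ∑ v, min 0 (x v) :=
      Finset.sum_add_sum_compl W _
    have hAsum : ∑ v ∈ W, (x v - n * δ) = f W - (W.card : ℝ) * (n * δ) := by
      rw [Finset.sum_sub_distrib, htight, Finset.sum_const, nsmul_eq_mul]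
    have hBsum : ∑ _v ∈ Wᶜ, (-(n * δ)) = -((Wᶜ.card : ℝ) * (n * δ)) := by
      rw [Finset.sum_const, nsmul_eq_mul]; ring
    have hkey : (W.card : ℝ) * (n * δ) + (Wᶜ.card : ℝ) * (n * δ) = n ^ 2 * δ := by
      rw [← add_mul, hcardW]; ring
    rw [hAsum] at hA
    rw [hBsum] at hB
    linarith
  · -- second claim
    have hA : ∑ v ∈ W, (x v - (∑ u, φ u v) - δ) ≤ ∑ v ∈ W, min 0 (x v - ∑ u, φ u v) := by
      apply Finset.sum_le_sum
      intro v hv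
      have h1 := hin v hv
      rcases le_total (x v - ∑ u, φ u v) 0 with h4 | h4
      · rw [min_eq_right h4]; linarith
      · rw [min_eq_left h4]; linarith
    have hB : ∑ _v ∈ Wᶜ, (-δ) ≤ ∑ v ∈ Wᶜ, min 0 (x v - ∑ u, φ u v) := by
      apply Finset.sum_le_sum
      intro v hv
      have h1 := hout v (Finset.mem_compl.mp hv)
      rcases le_total (x v - ∑ u, φ u v) 0 with h4 | h4
      · rw [min_eq_right h4]; linarith
      · rw [min_eq_left h4]; linarith
    have hsplit : ∑ v ∈ W, min 0 (x v - ∑ u, φ u v) + ∑ v ∈ Wᶜ, min 0 (x v - ∑ u, φ u v)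
        = ∑ v, min 0 (x v - ∑ u, φ u v) := Finset.sum_add_sum_compl W _
    have hAsum : ∑ v ∈ W, (x v - (∑ u, φ u v) - δ)
        = f W - (∑ v ∈ W, ∑ u, φ u v) - (W.card : ℝ) * δ := by
      rw [Finset.sum_sub_distrib, Finset.sum_sub_distrib, htight, Finset.sum_const,
        nsmul_eq_mul]
    have hBsum : ∑ _v ∈ Wᶜ, (-δ) = -((Wᶜ.card : ℝ) * δ) := by
      rw [Finset.sum_const, nsmul_eq_mul]; ring
    have hkey : (W.card : ℝ) * δ + (Wᶜ.card : ℝ) * δ = n * δ := by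
      rw [← add_mul, hcardW]
    rw [hAsum] at hA
    rw [hBsum] at hB
    linarith
end

section
/- Suppose f: 2^V → ℝ is submodular with f(∅)=0, x ∈ B(f), and there exists Y ⊆ V with x⁻(V) ≥ f(Y) - n²δ. If x(w) < -n²δ for some w ∈ V, then w belongs to every minimizer of f. -/
open Finset

theorem proximity_lemma {V : Type*} [Fintype V] [DecidableEq V]
    (f : Finset V → ℝ)
    (hsub : ∀ X Y : Finset V, f X + f Y ≥ f (X ∪ Y) + f (X ∩ Y))
    (h0 : f ∅ = 0)
    (x : V → ℝ)
    (hxV : ∑ v, x v = f Finset.univ)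
    (hxB : ∀ X : Finset V, ∑ v ∈ X, x v ≤ f X)
    (δ : ℝ) (hδ : 0 < δ)
    (Y : Finset V)
    (hY : ∑ v, min 0 (x v) ≥ f Y - (Fintype.card V : ℝ)^2 * δ)
    (w : V)
    (hw : x w < -(Fintype.card V : ℝ)^2 * δ) :
    ∀ X : Finset V, (∀ Z : Finset V, f X ≤ f Z) → w ∈ X := by
  intro X hmin
  by_contra hwX
  have hwc : w ∈ Xᶜ := Finset.mem_compl.mpr hwX
  have hsplit : ∑ v, min 0 (x v)
      = ∑ v ∈ X, min 0 (x v) + ∑ v ∈ Xᶜ, min 0 (x v) :=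
    (Finset.sum_add_sum_compl X _).symm
  have h1 : ∑ v ∈ X, min 0 (x v) ≤ ∑ v ∈ X, x v :=
    Finset.sum_le_sum fun v _ => min_le_right _ _
  have h2 : ∑ v ∈ Xᶜ, min 0 (x v) ≤ min 0 (x w) := by
    rw [← Finset.add_sum_erase _ _ hwc]
    have : ∑ v ∈ Xᶜ.erase w, min 0 (x v) ≤ 0 :=
      Finset.sum_nonpos fun v _ => min_le_left _ _
    linarith
  have h3 : min 0 (x w) ≤ x w := min_le_right _ _
  have h4 : ∑ v ∈ X, x v ≤ f X := hxB X
  have h5 : f X ≤ f Y := hmin Y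
  linarith [hsplit ▸ hY]
end
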